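/- Let Π be a ground classical disjunctive logic program (DLP, aggregate-free) and let Π′ = ⟨R, τ⟩ be its DHPP₁^PA translation, in which every atom is annotated with [1,1] and τ is an arbitrary assignment of disjunctive p-strategies. Assume every c_ρ composes any multiset of copies of [1,1] to [1,1]. For I ⊆ B_L, let h_I be the p-interpretation with h_I(a) = [1,1] if a ∈ I, h_I(a) = [0,0] if a ∈ B_L \ I, and h_I(A) = c_ρ{{h_I(a₁),…,h_I(a_n)}} for every compound hybrid basic formula A = a₁ *_ρ … *_ρ a_n. Then h_I is a probability answer set of Π′ if and only if I is a classical answer set of Π in the sense of Gelfond–Lifschitz. -/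
import Mathlib


open scoped Classical

noncomputable section

/-- `C[0,1]`: closed subintervals `[lo, hi]` of `[0,1]`, encoded as pairs of reals. -/
def PInterval : Type := {p : ℝ × ℝ // 0 ≤ p.1 ∧ p.1 ≤ p.2 ∧ p.2 ≤ 1}

/-- The truth order on raw pairs of reals (componentwise `≤`). -/
def tleP (x y : ℝ × ℝ) : Prop := x.1 ≤ y.1 ∧ x.2 ≤ y.2

/-- The truth order `≤_t` on `C[0,1]`:
`[α₁,β₁] ≤_t [α₂,β₂]` iff `α₁ ≤ α₂` and `β₁ ≤ β₂`. -/
def tle (x y : PInterval) : Prop := tleP x.val y.val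

/-- The interval `[0,0]`. -/
def zeroI : PInterval := ⟨(0, 0), by norm_num⟩

/-- The interval `[1,1]`. -/
def oneI : PInterval := ⟨(1, 1), by norm_num⟩

/-- A p-strategy: a probability composition function `c_ρ` on `C[0,1]`, commutative,
associative and monotone w.r.t. `≤_t` in each argument, together with its extension
to finite multisets of intervals by iterated application. -/
structure PStrategy where
  comp : PInterval → PInterval → PInterval
  compM : Multiset PInterval → PInterval
  comp_comm : ∀ x y, comp x y = comp y x
  comp_assoc : ∀ x y z, comp (comp x y) z = comp x (comp y z)
  comp_mono : ∀ x x' y y', tle x x' → tle y y' → tle (comp x y) (comp x' y')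
  compM_singleton : ∀ x, compM {x} = x
  compM_cons : ∀ x (s : Multiset PInterval), s ≠ 0 → compM (x ::ₘ s) = comp x (compM s)

/-- A signature of p-strategies: a family of p-strategies indexed by `Strat`, with a
designated class of disjunctive p-strategies, each of which composes the empty
multiset to `[0,0]`. -/
structure PSig (Strat : Type) where
  str : Strat → PStrategy
  IsDisj : Strat → Prop
  disj_empty : ∀ ρ, IsDisj ρ → (str ρ).compM 0 = zeroI

/-- Ground hybrid basic formulae over atoms from `Atom` and p-strategies from `Strat`:
atoms `a`, conjunctions `a₁ ∧_ρ … ∧_ρ aₙ`, and disjunctions `a₁ ∨_ρ … ∨_ρ aₙ`. -/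
inductive HBF (Atom Strat : Type) where
  | atom (a : Atom)
  | conj (ρ : Strat) (atoms : List Atom)
  | disj (ρ : Strat) (atoms : List Atom)

/-- A probability interpretation (p-interpretation): a mapping
`h : bf_S(B_L) → C[0,1]`. -/
abbrev PInterp (Atom Strat : Type) := HBF Atom Strat → PInterval

variable {Atom Strat : Type}

/-- Pointwise extension of `≤_t` to p-interpretations. -/
def interpLE (h₁ h₂ : PInterp Atom Strat) : Prop := ∀ A, tle (h₁ A) (h₂ A)

/-- Strict pointwise order on p-interpretations. -/
def interpLT (h₁ h₂ : PInterp Atom Strat) : Prop := interpLE h₁ h₂ ∧ h₁ ≠ h₂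

/-- Comparison operators `≺ ∈ {=, ≠, <, >, ≤, ≥}`. -/
inductive CmpOp | eq | ne | lt | gt | le | ge

/-- Evaluation of a comparison operator on reals. -/
def CmpOp.evalR : CmpOp → ℝ → ℝ → Prop
  | .eq, x, y => x = y
  | .ne, x, y => x ≠ y
  | .lt, x, y => x < y
  | .gt, x, y => x > y
  | .le, x, y => x ≤ y
  | .ge, x, y => x ≥ y

/-- Comparison of an interval-valued aggregate result with an interval guard
`T = [θ₁,θ₂]` (componentwise). -/
def CmpOp.evalI (op : CmpOp) (x T : ℝ × ℝ) : Prop := op.evalR x.1 T.1 ∧ op.evalR x.2 T.2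

/-- Comparison of a scalar aggregate value with an interval guard `T = [θ₁,θ₂]`. -/
def CmpOp.evalG (op : CmpOp) (x : ℝ) (T : ℝ × ℝ) : Prop := op.evalR x T.1 ∧ op.evalR x T.2

/-- Minimum of a list of reals (undefined, i.e. `none`, on the empty list). -/
def listMin : List ℝ → Option ℝ
  | [] => none
  | x :: xs => some (xs.foldl min x)

/-- Maximum of a list of reals (undefined, i.e. `none`, on the empty list). -/
def listMax : List ℝ → Option ℝ
  | [] => none
  | x :: xs => some (xs.foldl max x)

/-- Classical aggregate functions `{sum, times, min, max, count}`. -/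
inductive AggF | sum | times | min | max | count

/-- Classical aggregate on a multiset of reals; `min` and `max` are undefined on the
empty multiset, `sum ∅ = 0`, `times ∅ = 1`, `count ∅ = 0`. -/
def AggF.evalC : AggF → Multiset ℝ → Option ℝ
  | .sum, s => some s.sum
  | .times, s => some s.prod
  | .min, s => listMin s.toList
  | .max, s => listMax s.toList
  | .count, s => some (Multiset.card s)

/-- Expected-value probability aggregate functions
`{val_E, sum_E, times_E, min_E, max_E, count_E}`. -/
inductive EAggF | valE | sumE | timesE | minE | maxE | countE

/-- `X = Π_{F : [P₁,P₂] ∈ S_h} [P₁,P₂]`, the componentwise product of the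
probability annotations of the multiset. -/
def aggX (s : Multiset (ℝ × PInterval)) : ℝ × ℝ :=
  ((s.map fun e => e.2.val.1).prod, (s.map fun e => e.2.val.2).prod)

/-- Evaluation of the expected-value probability aggregates on a multiset
`S_h` of annotated values; `⊥` is represented by `none`. -/
def EAggF.evalE : EAggF → Multiset (ℝ × PInterval) → Option (ℝ × ℝ)
  | .valE, s =>
      some ((s.map fun e => e.1 * e.2.val.1).sum, (s.map fun e => e.1 * e.2.val.2).sum)
  | .sumE, s => some ((s.map Prod.fst).sum • aggX s)
  | .timesE, s => some ((s.map Prod.fst).prod • aggX s)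
  | .minE, s => (listMin (s.map Prod.fst).toList).map (· • aggX s)
  | .maxE, s => (listMax (s.map Prod.fst).toList).map (· • aggX s)
  | .countE, s => some ((Multiset.card s : ℝ) • aggX s)

/-- Evaluation of the probability-value aggregates `{sum_P, times_P, min_P, max_P,
count_P}` on a multiset `S_h`: the pair (classical aggregate of the values, `X`). -/
def AggF.evalP (f : AggF) (s : Multiset (ℝ × PInterval)) : Option (ℝ × (ℝ × ℝ)) :=
  (f.evalC (s.map Prod.fst)).map fun x => (x, aggX s)

/-- An element `⟨F : [P₁,P₂] | C⟩` of a ground probability set: a real constant `F`,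
a probability annotation and a finite conjunction of probability annotated hybrid
basic formulae. -/
structure PSetElem (Atom Strat : Type) where
  F : ℝ
  ann : PInterval
  C : List (HBF Atom Strat × PInterval)

/-- `h` satisfies a conjunction of probability annotated hybrid basic formulae. -/
def satC (h : PInterp Atom Strat) (C : List (HBF Atom Strat × PInterval)) : Prop :=
  ∀ p ∈ C, tle p.2 (h p.1)

/-- The multiset `S_h = {{F : [P₁,P₂] | ⟨F : [P₁,P₂] | C⟩ ∈ S and C is true w.r.t. h}}`. -/
def groundSet (h : PInterp Atom Strat) (S : Finset (PSetElem Atom Strat)) :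
    Multiset (ℝ × PInterval) :=
  (S.val.filter fun e => satC h e.C).map fun e => (e.F, e.ann)

/-- A body element: a ground hybrid basic formula or a ground probability aggregate
atom `f(S) ≺ T` (expected-value or probability-value kind) with interval guard `T`. -/
inductive BodyElem (Atom Strat : Type) where
  | hbf (A : HBF Atom Strat)
  | eagg (f : EAggF) (S : Finset (PSetElem Atom Strat)) (op : CmpOp) (T : ℝ × ℝ)
  | pagg (f : AggF) (S : Finset (PSetElem Atom Strat)) (op : CmpOp) (T : ℝ × ℝ)

/-- A ground DHPP^PA rule
`a₁:μ₁ ∨ … ∨ a_k:μ_k ← A_{k+1}:μ_{k+1}, …, A_m:μ_m, not A_{m+1}:μ_{m+1}, …, not A_n:μ_n`. -/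
structure Rule (Atom Strat : Type) where
  head : List (Atom × PInterval)
  pos : List (BodyElem Atom Strat × PInterval)
  neg : List (BodyElem Atom Strat × PInterval)

/-- Satisfaction of a (positive) annotated body element by `h`.  Expected-value
aggregate atoms carry the annotation `[1,1]`, i.e. their annotation is ignored. -/
def satPos (h : PInterp Atom Strat) : BodyElem Atom Strat × PInterval → Prop
  | (.hbf A, μ) => tle μ (h A)
  | (.eagg f S op T, _) => ∃ x, f.evalE (groundSet h S) = some x ∧ op.evalI x T
  | (.pagg f S op T, μ) =>
      ∃ x ν, f.evalP (groundSet h S) = some (x, ν) ∧ op.evalG x T ∧ tleP μ.val ν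

/-- Satisfaction of a negated annotated body element (`not A:μ`) by `h`. -/
def satNeg (h : PInterp Atom Strat) : BodyElem Atom Strat × PInterval → Prop
  | (.hbf A, μ) => ¬ tle μ (h A)
  | (.eagg f S op T, _) =>
      f.evalE (groundSet h S) = none ∨
        ∃ x, f.evalE (groundSet h S) = some x ∧ ¬ op.evalI x T
  | (.pagg f S op T, μ) =>
      f.evalP (groundSet h S) = none ∨
        ∃ x ν, f.evalP (groundSet h S) = some (x, ν) ∧ (¬ op.evalG x T ∨ ¬ tleP μ.val ν)

/-- `h` satisfies `body(r)`. -/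
def satBody (h : PInterp Atom Strat) (r : Rule Atom Strat) : Prop :=
  (∀ e ∈ r.pos, satPos h e) ∧ (∀ e ∈ r.neg, satNeg h e)

/-- `h` satisfies `head(r)`. -/
def satHead (h : PInterp Atom Strat) (r : Rule Atom Strat) : Prop :=
  ∃ p ∈ r.head, tle p.2 (h (HBF.atom p.1))

/-- `h` satisfies the rule `r`. -/
def satRule (h : PInterp Atom Strat) (r : Rule Atom Strat) : Prop :=
  satBody h r → satHead h r

/-- A ground DHPP^PA program `Π = ⟨R, τ⟩`. -/
structure Program (Atom Strat : Type) where
  R : Finset (Rule Atom Strat)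
  τ : Atom → Strat

/-- The multiset `{{μ : some r ∈ R has a:μ in head(r), h satisfies body(r), and
h satisfies a:μ}}`. -/
def headAnns (h : PInterp Atom Strat) (R : Finset (Rule Atom Strat)) (a : Atom) :
    Multiset PInterval :=
  R.val.bind fun r =>
    if satBody h r then
      ((↑r.head : Multiset (Atom × PInterval)).filter
          fun p => p.1 = a ∧ tle p.2 (h (HBF.atom a))).map Prod.snd
    else 0

/-- `h` is a p-model of `Π`: it satisfies every rule, and moreover (i) for every atom
`a`, `c_{τ(a)}{{μ : …}} ≤_t h(a)`, and (ii) for every compound hybrid basic formula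
`A = a₁ *_ρ … *_ρ aₙ`, `c_ρ{{h(a₁),…,h(aₙ)}} ≤_t h(A)`. -/
def isPModel (sig : PSig Strat) (P : Program Atom Strat) (h : PInterp Atom Strat) : Prop :=
  (∀ r ∈ P.R, satRule h r) ∧
  (∀ a : Atom, tle ((sig.str (P.τ a)).compM (headAnns h P.R a)) (h (HBF.atom a))) ∧
  (∀ (ρ : Strat) (l : List Atom),
    tle ((sig.str ρ).compM (↑(l.map fun a => h (HBF.atom a)))) (h (HBF.conj ρ l)) ∧
    tle ((sig.str ρ).compM (↑(l.map fun a => h (HBF.atom a)))) (h (HBF.disj ρ l)))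

/-- The probability reduct `Π^h = ⟨R^h, τ⟩`, `R^h = {r ∈ R : h satisfies body(r)}`. -/
def reduct (P : Program Atom Strat) (h : PInterp Atom Strat) : Program Atom Strat :=
  ⟨P.R.filter fun r => satBody h r, P.τ⟩

/-- `h` is a `≤_t`-minimal p-model of `Π`. -/
def isMinimalPModel (sig : PSig Strat) (P : Program Atom Strat)
    (h : PInterp Atom Strat) : Prop :=
  isPModel sig P h ∧ ∀ h', isPModel sig P h' → ¬ interpLT h' h

/-- `h` is a probability answer set of `Π` iff `h` is a `≤_t`-minimal p-model
of the probability reduct `Π^h`. -/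
def isAnswerSet (sig : PSig Strat) (P : Program Atom Strat) (h : PInterp Atom Strat) : Prop :=
  isMinimalPModel sig (reduct P h) h


/-! ### Classical side: ground (aggregate-free) disjunctive logic programs -/

/-- A ground DLP rule `a₁ ∨ … ∨ a_k ← a_{k+1}, …, a_m, not a_{m+1}, …, not a_n`. -/
structure DRule (Atom : Type) where
  head : List Atom
  pos : List Atom
  neg : List Atom

/-- A ground DLP program. -/
structure DProgram (Atom : Type) where
  rules : Finset (DRule Atom)

/-- `I ⊆ B_L` is a model of a DLP rule: whenever `{a_{k+1},…,a_m} ⊆ I` and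
`{a_{m+1},…,a_n} ∩ I = ∅`, some head atom is in `I`. -/
def dModelsRule (I : Set Atom) (r : DRule Atom) : Prop :=
  ((∀ a ∈ r.pos, a ∈ I) ∧ (∀ a ∈ r.neg, a ∉ I)) → ∃ a ∈ r.head, a ∈ I

/-- `I` is a model of a DLP program. -/
def isDModel (P : DProgram Atom) (I : Set Atom) : Prop :=
  ∀ r ∈ P.rules, dModelsRule I r

/-- The Gelfond–Lifschitz reduct `Π^I`: the rules `a₁ ∨ … ∨ a_k ← a_{k+1}, …, a_m`
for those rules of `Π` with `{a_{m+1},…,a_n} ∩ I = ∅`. -/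
def dGLReduct (P : DProgram Atom) (I : Set Atom) : DProgram Atom :=
  ⟨(P.rules.filter fun r => ∀ a ∈ r.neg, a ∉ I).image fun r => ⟨r.head, r.pos, []⟩⟩

/-- `I` is a classical answer set of `Π` in the sense of Gelfond–Lifschitz:
a subset-minimal model of the Gelfond–Lifschitz reduct `Π^I`. -/
def isGLAnswerSet (P : DProgram Atom) (I : Set Atom) : Prop :=
  isDModel (dGLReduct P I) I ∧ ¬ ∃ J : Set Atom, isDModel (dGLReduct P I) J ∧ J ⊂ I

/-! ### The DHPP₁^PA translation -/

/-- Translation of a DLP rule: every atom is annotated with `[1,1]`. -/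
def transDRule (r : DRule Atom) : Rule Atom Strat :=
  ⟨r.head.map fun a => (a, oneI),
   r.pos.map fun a => (BodyElem.hbf (HBF.atom a), oneI),
   r.neg.map fun a => (BodyElem.hbf (HBF.atom a), oneI)⟩

/-- The DHPP₁^PA translation `Π′ = ⟨R, τ⟩` of a DLP program `Π`, with `τ` an
arbitrary assignment of disjunctive p-strategies. -/
def transDProgram (P : DProgram Atom) (τ : Atom → Strat) : Program Atom Strat :=
  ⟨P.rules.image transDRule, τ⟩

/-- The p-interpretation value of an atom determined by `I ⊆ B_L`:
`[1,1]` if `a ∈ I` and `[0,0]` otherwise. -/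
def atomVal (I : Set Atom) (a : Atom) : PInterval :=
  if a ∈ I then oneI else zeroI

/-- The p-interpretation `h_I`: `h_I(a) = [1,1]` if `a ∈ I`, `h_I(a) = [0,0]` if
`a ∈ B_L \ I`, and `h_I(A) = c_ρ{{h_I(a₁),…,h_I(aₙ)}}` for every compound hybrid
basic formula `A = a₁ *_ρ … *_ρ aₙ`. -/
def hInterp (sig : PSig Strat) (I : Set Atom) : PInterp Atom Strat :=
  fun A =>
    match A with
    | .atom a => atomVal I a
    | .conj ρ l => (sig.str ρ).compM (↑(l.map (atomVal I)))
    | .disj ρ l => (sig.str ρ).compM (↑(l.map (atomVal I)))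

/-! ### Auxiliary lemmas -/

lemma tle_refl (x : PInterval) : tle x x := ⟨le_refl _, le_refl _⟩

lemma tle_trans {x y z : PInterval} (h₁ : tle x y) (h₂ : tle y z) : tle x z :=
  ⟨h₁.1.trans h₂.1, h₁.2.trans h₂.2⟩

lemma tle_antisymm {x y : PInterval} (h₁ : tle x y) (h₂ : tle y x) : x = y := by
  apply Subtype.ext
  exact Prod.ext (le_antisymm h₁.1 h₂.1) (le_antisymm h₁.2 h₂.2)

lemma zeroI_tle (x : PInterval) : tle zeroI x :=
  ⟨x.prop.1, x.prop.1.trans x.prop.2.1⟩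

lemma tle_oneI_iff {x : PInterval} : tle oneI x ↔ x = oneI := by
  constructor
  · intro h
    apply Subtype.ext
    exact Prod.ext (le_antisymm (x.prop.2.1.trans x.prop.2.2) h.1)
      (le_antisymm x.prop.2.2 h.2)
  · rintro rfl; exact tle_refl _

lemma tle_zeroI_iff {x : PInterval} : tle x zeroI ↔ x = zeroI := by
  constructor
  · intro h
    apply Subtype.ext
    exact Prod.ext (le_antisymm h.1 x.prop.1)
      (le_antisymm h.2 (x.prop.1.trans x.prop.2.1))
  · rintro rfl; exact tle_refl _

lemma zeroI_ne_oneI : zeroI ≠ oneI := by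
  intro h
  have : (0 : ℝ) = 1 := congrArg (fun x => x.val.1) h
  norm_num at this

lemma not_tle_oneI_zeroI : ¬ tle oneI zeroI := by
  intro h
  exact zeroI_ne_oneI (tle_oneI_iff.mp h)

lemma atomVal_one_iff {I : Set Atom} {a : Atom} : tle oneI (atomVal I a) ↔ a ∈ I := by
  unfold atomVal
  split
  · exact iff_of_true (tle_refl _) ‹a ∈ I›
  · exact iff_of_false not_tle_oneI_zeroI ‹a ∉ I›

lemma atomVal_mono {I J : Set Atom} (hJI : J ⊆ I) (a : Atom) :
    tle (atomVal J a) (atomVal I a) := by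
  unfold atomVal
  split
  · rw [if_pos (hJI ‹a ∈ J›)]; exact tle_refl _
  · exact zeroI_tle _

lemma compM_mono (ρ : PStrategy) {l₁ l₂ : List PInterval} (h : List.Forall₂ tle l₁ l₂) :
    tle (ρ.compM ↑l₁) (ρ.compM ↑l₂) := by
  induction h with
  | nil => exact tle_refl _
  | @cons x y l₁ l₂ hxy hl ih =>
    cases hl with
    | nil =>
      simpa only [Multiset.coe_singleton, ρ.compM_singleton] using hxy
    | @cons a b t₁ t₂ hab ht =>
      have h₁ : ((a :: t₁ : List PInterval) : Multiset PInterval) ≠ 0 := by simp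
      have h₂ : ((b :: t₂ : List PInterval) : Multiset PInterval) ≠ 0 := by simp
      have e₁ : ((x :: a :: t₁ : List PInterval) : Multiset PInterval)
          = x ::ₘ ↑(a :: t₁) := by simp
      have e₂ : ((y :: b :: t₂ : List PInterval) : Multiset PInterval)
          = y ::ₘ ↑(b :: t₂) := by simp
      rw [e₁, e₂, ρ.compM_cons _ _ h₁, ρ.compM_cons _ _ h₂]
      exact ρ.comp_mono _ _ _ _ hxy ih

lemma forall₂_map_tle {l : List Atom} {f g : Atom → PInterval}
    (h : ∀ a ∈ l, tle (f a) (g a)) : List.Forall₂ tle (l.map f) (l.map g) := by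
  induction l with
  | nil => exact List.Forall₂.nil
  | cons a t ih =>
    exact List.Forall₂.cons (h a (by simp)) (ih fun b hb => h b (by simp [hb]))

lemma hInterp_atom (sig : PSig Strat) (I : Set Atom) (a : Atom) :
    hInterp sig I (HBF.atom a) = atomVal I a := rfl

lemma hInterp_le {I J : Set Atom} (sig : PSig Strat) (hJI : J ⊆ I) :
    interpLE (hInterp sig J) (hInterp sig I) := by
  intro A
  cases A with
  | atom a => exact atomVal_mono hJI a
  | conj ρ l => exact compM_mono _ (forall₂_map_tle fun a _ => atomVal_mono hJI a)
  | disj ρ l => exact compM_mono _ (forall₂_map_tle fun a _ => atomVal_mono hJI a)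

/-- Condition (i) of p-models holds for any interpretation, as long as every head
annotation in the program is `[1,1]`. -/
lemma cond_i (sig : PSig Strat) {τ : Atom → Strat} (hτ : ∀ a : Atom, sig.IsDisj (τ a))
    (hone : ∀ (ρ : Strat) (s : Multiset PInterval),
      s ≠ 0 → (∀ x ∈ s, x = oneI) → (sig.str ρ).compM s = oneI)
    (R : Finset (Rule Atom Strat))
    (hR : ∀ r ∈ R, ∀ p ∈ r.head, p.2 = oneI) (h : PInterp Atom Strat) (a : Atom) :
    tle ((sig.str (τ a)).compM (headAnns h R a)) (h (HBF.atom a)) := by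
  have key : ∀ ν ∈ headAnns h R a, ν = oneI ∧ tle ν (h (HBF.atom a)) := by
    intro ν hν
    simp only [headAnns, Multiset.mem_bind] at hν
    obtain ⟨r, hr, hν⟩ := hν
    by_cases hb : satBody h r
    · rw [if_pos hb] at hν
      simp only [Multiset.mem_map, Multiset.mem_filter, Multiset.mem_coe] at hν
      obtain ⟨p, ⟨hp, _, hpt⟩, rfl⟩ := hν
      exact ⟨hR r hr p hp, hpt⟩
    · rw [if_neg hb] at hν
      exact absurd hν (Multiset.notMem_zero _)
  by_cases hz : headAnns h R a = 0
  · rw [hz, sig.disj_empty _ (hτ a)]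
    exact zeroI_tle _
  · obtain ⟨μ, hμ⟩ := Multiset.exists_mem_of_ne_zero hz
    rw [hone _ _ hz fun x hx => (key x hx).1]
    have := key μ hμ
    rw [this.1] at this
    exact this.2

/-- Condition (ii) of p-models holds for `h_I`. -/
lemma cond_ii (sig : PSig Strat) (I : Set Atom) (ρ : Strat) (l : List Atom) :
    tle ((sig.str ρ).compM (↑(l.map fun a => hInterp sig I (HBF.atom a))))
        (hInterp sig I (HBF.conj ρ l)) ∧
    tle ((sig.str ρ).compM (↑(l.map fun a => hInterp sig I (HBF.atom a))))
        (hInterp sig I (HBF.disj ρ l)) := by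
  constructor <;> exact tle_refl _

lemma satBody_trans (h : PInterp Atom Strat) (r : DRule Atom) :
    satBody h (transDRule r : Rule Atom Strat) ↔
      (∀ a ∈ r.pos, tle oneI (h (HBF.atom a))) ∧
      (∀ a ∈ r.neg, ¬ tle oneI (h (HBF.atom a))) := by
  unfold satBody transDRule
  simp [satPos, satNeg]

lemma satHead_trans (h : PInterp Atom Strat) (r : DRule Atom) :
    satHead h (transDRule r : Rule Atom Strat) ↔
      ∃ a ∈ r.head, tle oneI (h (HBF.atom a)) := by
  unfold satHead transDRule
  simp

lemma headAnns_oneI_of_trans {P : DProgram Atom} {τ : Atom → Strat}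
    {h : PInterp Atom Strat} :
    ∀ r ∈ (reduct (transDProgram P τ) h).R, ∀ p ∈ r.head, p.2 = oneI := by
  intro r hr p hp
  simp only [reduct, transDProgram, Finset.mem_filter, Finset.mem_image] at hr
  obtain ⟨⟨r₀, _, rfl⟩, _⟩ := hr
  simp only [transDRule, List.mem_map] at hp
  obtain ⟨a, _, rfl⟩ := hp
  rfl

/-- A characterization of p-models of the probability reduct of a translated program,
for interpretations of the form `h_J`. -/
lemma isPModel_reduct_iff (sig : PSig Strat) (P : DProgram Atom) (τ : Atom → Strat)
    (hτ : ∀ a : Atom, sig.IsDisj (τ a))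
    (hone : ∀ (ρ : Strat) (s : Multiset PInterval),
      s ≠ 0 → (∀ x ∈ s, x = oneI) → (sig.str ρ).compM s = oneI)
    (h : PInterp Atom Strat) (J : Set Atom) :
    isPModel sig (reduct (transDProgram P τ) h) (hInterp sig J) ↔
      ∀ r ∈ P.rules, satBody h (transDRule r : Rule Atom Strat) →
        satRule (hInterp sig J) (transDRule r) := by
  constructor
  · intro hpm r hr hb
    apply hpm.1
    simp only [reduct, transDProgram, Finset.mem_filter, Finset.mem_image]
    exact ⟨⟨r, hr, rfl⟩, hb⟩
  · intro hrules
    refine ⟨?_, ?_, ?_⟩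
    · intro r' hr'
      simp only [reduct, transDProgram, Finset.mem_filter, Finset.mem_image] at hr'
      obtain ⟨⟨r, hr, rfl⟩, hb⟩ := hr'
      exact hrules r hr hb
    · intro a
      exact cond_i sig hτ hone _ headAnns_oneI_of_trans _ a
    · intro ρ l
      exact cond_ii sig J ρ l

/-- Let `Π` be a ground (aggregate-free) DLP program and
`Π′ = ⟨R, τ⟩` its DHPP₁^PA translation, with `τ` an arbitrary assignment of
disjunctive p-strategies, and assume every `c_ρ` composes any (nonempty) multiset of
copies of `[1,1]` to `[1,1]`.  Then `h_I` is a probability answer set of `Π′` iff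
`I` is a classical answer set of `Π` in the sense of Gelfond–Lifschitz. -/
theorem dlp_subsumption {Atom Strat : Type} (sig : PSig Strat)
    (P : DProgram Atom) (τ : Atom → Strat) (hτ : ∀ a : Atom, sig.IsDisj (τ a))
    (hone : ∀ (ρ : Strat) (s : Multiset PInterval),
      s ≠ 0 → (∀ x ∈ s, x = oneI) → (sig.str ρ).compM s = oneI)
    (I : Set Atom) :
    isAnswerSet sig (transDProgram P τ) (hInterp sig I) ↔ isGLAnswerSet P I := by
  constructor
  · rintro ⟨hpm, hmin⟩
    constructor
    · -- I is a model of the GL reduct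
      intro r'' hr''
      simp only [dGLReduct, Finset.mem_image, Finset.mem_filter] at hr''
      obtain ⟨r, ⟨hr, hneg⟩, rfl⟩ := hr''
      rintro ⟨hpos, -⟩
      have hb : satBody (hInterp sig I) (transDRule r : Rule Atom Strat) := by
        rw [satBody_trans]
        exact ⟨fun a ha => atomVal_one_iff.mpr (hpos a ha),
               fun a ha h' => hneg a ha (atomVal_one_iff.mp h')⟩
      have hsat := (isPModel_reduct_iff sig P τ hτ hone _ I).mp hpm r hr hb hb
      rw [satHead_trans] at hsat
      obtain ⟨a, ha, hta⟩ := hsat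
      exact ⟨a, ha, atomVal_one_iff.mp hta⟩
    · -- minimality
      rintro ⟨J, hJmod, hJsub⟩
      refine hmin (hInterp sig J) ?_ ⟨hInterp_le sig hJsub.subset, ?_⟩
      · rw [isPModel_reduct_iff sig P τ hτ hone]
        intro r hr hb hbJ
        rw [satBody_trans] at hb hbJ
        have hGL : (⟨r.head, r.pos, []⟩ : DRule Atom) ∈ (dGLReduct P I).rules := by
          simp only [dGLReduct, Finset.mem_image, Finset.mem_filter]
          exact ⟨r, ⟨hr, fun a ha hmem => hb.2 a ha (atomVal_one_iff.mpr hmem)⟩, rfl⟩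
        have hhead := hJmod _ hGL
          ⟨fun a ha => atomVal_one_iff.mp (hbJ.1 a ha), by simp⟩
        rw [satHead_trans]
        obtain ⟨a, ha, haJ⟩ := hhead
        exact ⟨a, ha, atomVal_one_iff.mpr haJ⟩
      · -- hInterp sig J ≠ hInterp sig I
        obtain ⟨a, haI, haJ⟩ := Set.exists_of_ssubset hJsub
        intro heq
        have hval : atomVal J a = atomVal I a := congrFun heq (HBF.atom a)
        rw [atomVal, atomVal, if_neg haJ, if_pos haI] at hval
        exact zeroI_ne_oneI hval
  · rintro ⟨hImod, hImin⟩
    constructor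
    · -- hInterp sig I is a p-model of the reduct
      rw [isPModel_reduct_iff sig P τ hτ hone]
      intro r hr hb _
      rw [satBody_trans] at hb
      have hGL : (⟨r.head, r.pos, []⟩ : DRule Atom) ∈ (dGLReduct P I).rules := by
        simp only [dGLReduct, Finset.mem_image, Finset.mem_filter]
        exact ⟨r, ⟨hr, fun a ha hmem => hb.2 a ha (atomVal_one_iff.mpr hmem)⟩, rfl⟩
      have hhead := hImod _ hGL ⟨fun a ha => atomVal_one_iff.mp (hb.1 a ha), by simp⟩
      rw [satHead_trans]
      obtain ⟨a, ha, haI⟩ := hhead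
      exact ⟨a, ha, atomVal_one_iff.mpr haI⟩
    · -- minimality among p-models of the reduct
      rintro h' hpm' ⟨hle, hne⟩
      set J : Set Atom := {a | tle oneI (h' (HBF.atom a))} with hJdef
      have hJI : J ⊆ I := fun a ha =>
        atomVal_one_iff.mp (tle_trans ha (hle (HBF.atom a)))
      have hatomNI : ∀ a, a ∉ I → h' (HBF.atom a) = zeroI := by
        intro a haI
        have hle' := hle (HBF.atom a)
        rw [show hInterp sig I (HBF.atom a) = zeroI by
          rw [hInterp_atom, atomVal, if_neg haI]] at hle'
        exact tle_zeroI_iff.mp hle'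
      have hJmod : isDModel (dGLReduct P I) J := by
        intro r'' hr''
        simp only [dGLReduct, Finset.mem_image, Finset.mem_filter] at hr''
        obtain ⟨r, ⟨hr, hneg⟩, rfl⟩ := hr''
        rintro ⟨hpos, -⟩
        have hb : satBody (hInterp sig I) (transDRule r : Rule Atom Strat) := by
          rw [satBody_trans]
          exact ⟨fun a ha => atomVal_one_iff.mpr (hJI (hpos a ha)),
                 fun a ha h'' => hneg a ha (atomVal_one_iff.mp h'')⟩
        have hmem : (transDRule r : Rule Atom Strat) ∈
            (reduct (transDProgram P τ) (hInterp sig I)).R := by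
          simp only [reduct, transDProgram, Finset.mem_filter, Finset.mem_image]
          exact ⟨⟨r, hr, rfl⟩, hb⟩
        have hbJ : satBody h' (transDRule r : Rule Atom Strat) := by
          rw [satBody_trans]
          refine ⟨fun a ha => hpos a ha, fun a ha hc => ?_⟩
          rw [hatomNI a (hneg a ha)] at hc
          exact not_tle_oneI_zeroI hc
        have hhd := hpm'.1 _ hmem hbJ
        rw [satHead_trans] at hhd
        exact hhd
      have hJeq : J = I := by
        by_contra hne'
        exact hImin ⟨J, hJmod, Set.ssubset_iff_subset_ne.mpr ⟨hJI, hne'⟩⟩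
      apply hne
      have hatom : ∀ a, h' (HBF.atom a) = atomVal I a := by
        intro a
        by_cases haI : a ∈ I
        · rw [atomVal, if_pos haI]
          exact tle_oneI_iff.mp (show a ∈ J from hJeq ▸ haI)
        · rw [atomVal, if_neg haI]
          exact hatomNI a haI
      have hmap : ∀ l : List Atom,
          (l.map fun a => h' (HBF.atom a)) = l.map (atomVal I) :=
        fun l => List.map_congr_left fun a _ => hatom a
      funext A
      cases A with
      | atom a => exact hatom a
      | conj ρ l =>
        refine tle_antisymm (hle _) ?_
        have hc := (hpm'.2.2 ρ l).1
        rw [hmap l] at hc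
        exact hc
      | disj ρ l =>
        refine tle_antisymm (hle _) ?_
        have hc := (hpm'.2.2 ρ l).2
        rw [hmap l] at hc
        exact hc

end
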